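/- arXiv:2007.13873 — 3 statements merged into one kernel-verified Lean document; each statement's English description precedes it below -/
import Mathlib

section
/- The Itô–Hermite polynomials form an orthogonal system in L²(ℂ, e^{-|z|²} dλ(z)): for all nonnegative integers m, n, j, k, ∫_ℂ H_{m,n}(z, z̄) · conj(H_{j,k}(z, z̄)) · e^{-|z|²} dλ(z) = π · m! · n! · δ_{m,j} · δ_{n,k}, where λ is Lebesgue measure on ℂ ≅ ℝ². -/
open MeasureTheory Complex Finset

noncomputable section

/-- Wirtinger holomorphic derivative `∂_z = (1/2)(∂_x - i ∂_y)` on functions `ℂ → ℂ`. -/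
def wdz (f : ℂ → ℂ) (z : ℂ) : ℂ :=
  (1/2 : ℂ) * (fderiv ℝ f z 1 - Complex.I * fderiv ℝ f z Complex.I)

/-- Wirtinger antiholomorphic derivative `∂_z̄ = (1/2)(∂_x + i ∂_y)`. -/
def wdzbar (f : ℂ → ℂ) (z : ℂ) : ℂ :=
  (1/2 : ℂ) * (fderiv ℝ f z 1 + Complex.I * fderiv ℝ f z Complex.I)

/-- The Gaussian `e^{-|z|²}`. -/
def gauss (z : ℂ) : ℂ := Complex.exp (-(Complex.normSq z : ℂ))

/-- The Itô–Hermite (complex Hermite) polynomials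
`H_{m,n}(z,z̄) = (-1)^{m+n} e^{|z|²} ∂_z^m ∂_z̄^n (e^{-|z|²})`. -/
def Hpoly (m n : ℕ) (z : ℂ) : ℂ :=
  (-1 : ℂ)^(m+n) * Complex.exp ((Complex.normSq z : ℂ)) * (wdz^[m] (wdzbar^[n] gauss)) z

/-- The weighted planar Cauchy transform `C f(z) = (1/π) ∫ f(ξ)/(z-ξ) e^{-|ξ|²} dλ(ξ)`. -/
def cauchyT (f : ℂ → ℂ) (z : ℂ) : ℂ :=
  (1/(Real.pi : ℂ)) * ∫ ξ : ℂ, f ξ / (z - ξ) * gauss ξ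

/-- Terminating Kummer confluent hypergeometric polynomial `₁F₁(-m; c; t)`. -/
def kummer (m : ℕ) (c : ℂ) (t : ℂ) : ℂ :=
  ∑ k ∈ Finset.range (m+1),
    ((ascPochhammer ℂ k).eval (-(m:ℂ)) / (ascPochhammer ℂ k).eval c) * t^k / (k.factorial : ℂ)

/-- The Laguerre polynomial `L_n(t) = Σ_{k=0}^n (-1)^k C(n,k) t^k/k!`. -/
def Lag (n : ℕ) (t : ℂ) : ℂ :=
  ∑ k ∈ Finset.range (n+1), (-1:ℂ)^k * (n.choose k : ℂ) * t^k / (k.factorial : ℂ)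

/-- The `n`-th Bergman-type projection `P_n` onto the true poly-Bargmann space `A²_n`. -/
def projP (n : ℕ) (f : ℂ → ℂ) (z : ℂ) : ℂ :=
  (1/(Real.pi : ℂ)) *
    ∫ ξ : ℂ, Lag n (Complex.normSq (z - ξ) : ℂ) * Complex.exp ((starRingEnd ℂ) z * ξ) * f ξ * gauss ξ

/-- The Gaussian measure `e^{-|z|²} dλ(z)` on `ℂ`. -/
def gaussMeasure : Measure ℂ :=
  volume.withDensity (fun z => ENNReal.ofReal (Real.exp (-Complex.normSq z)))

/-!
The `n`-fold `∂_z̄`-derivative of `e^{-|z|²}` is `(-z)^n e^{-|z|²}`, and the Leibniz rule then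
shows that `H_{m,n}` obeys `H_{m+1,n} = z̄ H_{m,n} - n H_{m,n-1}` with `∂_z H_{m,n} = n H_{m,n-1}`;
from the recursion one also gets `z H_{j,k} = H_{j,k+1} + j H_{j-1,k}`. As multiplication by `z̄`
is adjoint to multiplication by `z` in `L²(e^{-|z|²} dλ)`, the Gram matrix `G(m,n;j,k)` satisfies
`G(m+1,n;j,k) = G(m,n;j,k+1) + j G(m,n;j-1,k) - n G(m,n-1;j,k)`, which `π m! n! δ_{mj} δ_{nk}`
satisfies as well. Induction on `m` (and, by conjugate symmetry, on `j`) reduces everything to the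
moments `∫ z̄^a z^b e^{-|z|²} dλ`: for `a = b` a Gamma integral giving `π a!`, while for `a ≠ b`
rotating by `ω = e^{iπ/(b-a)}` multiplies the integral by `ω̄^a ω^b = -1`, so it vanishes.
-/

open ComplexConjugate
open scoped Real

section Wirtinger

variable {f g : ℂ → ℂ} {z : ℂ}

lemma wdz_eq_of_hasFDerivAt {L : ℂ →L[ℝ] ℂ} (h : HasFDerivAt f L z) :
    wdz f z = (1 / 2 : ℂ) * (L 1 - I * L I) := by
  rw [wdz, h.fderiv]

lemma wdzbar_eq_of_hasFDerivAt {L : ℂ →L[ℝ] ℂ} (h : HasFDerivAt f L z) :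
    wdzbar f z = (1 / 2 : ℂ) * (L 1 + I * L I) := by
  rw [wdzbar, h.fderiv]

lemma wdz_mul (hf : DifferentiableAt ℝ f z) (hg : DifferentiableAt ℝ g z) :
    wdz (fun w => f w * g w) z = wdz f z * g z + f z * wdz g z := by
  rw [wdz_eq_of_hasFDerivAt (hf.hasFDerivAt.fun_mul hg.hasFDerivAt), wdz, wdz]
  simp only [add_apply, smul_apply, smul_eq_mul]
  ring

lemma wdzbar_mul (hf : DifferentiableAt ℝ f z) (hg : DifferentiableAt ℝ g z) :
    wdzbar (fun w => f w * g w) z = wdzbar f z * g z + f z * wdzbar g z := by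
  rw [wdzbar_eq_of_hasFDerivAt (hf.hasFDerivAt.fun_mul hg.hasFDerivAt), wdzbar, wdzbar]
  simp only [add_apply, smul_apply, smul_eq_mul]
  ring

lemma wdz_sub (hf : DifferentiableAt ℝ f z) (hg : DifferentiableAt ℝ g z) :
    wdz (fun w => f w - g w) z = wdz f z - wdz g z := by
  rw [wdz_eq_of_hasFDerivAt (hf.hasFDerivAt.fun_sub hg.hasFDerivAt), wdz, wdz]
  simp only [sub_apply]
  ring

lemma wdz_comp {h : ℂ → ℂ} (hh : DifferentiableAt ℂ h (f z)) (hf : DifferentiableAt ℝ f z) :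
    wdz (fun w => h (f w)) z = deriv h (f z) * wdz f z := by
  rw [show (fun w => h (f w)) = h ∘ f from rfl, wdz_eq_of_hasFDerivAt
    ((hh.hasDerivAt.hasFDerivAt.restrictScalars ℝ).comp z hf.hasFDerivAt), wdz]
  simp only [ContinuousLinearMap.comp_apply, ContinuousLinearMap.coe_restrictScalars',
    ContinuousLinearMap.toSpanSingleton_apply, smul_eq_mul]
  ring

lemma wdz_eq_deriv (hf : DifferentiableAt ℂ f z) : wdz f z = deriv f z := by
  rw [wdz_eq_of_hasFDerivAt (hf.hasDerivAt.hasFDerivAt.restrictScalars ℝ)]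
  simp only [ContinuousLinearMap.coe_restrictScalars', ContinuousLinearMap.toSpanSingleton_apply,
    smul_eq_mul, ← mul_assoc, I_mul_I]
  ring

lemma wdzbar_eq_zero_of_differentiableAt (hf : DifferentiableAt ℂ f z) : wdzbar f z = 0 := by
  rw [wdzbar_eq_of_hasFDerivAt (hf.hasDerivAt.hasFDerivAt.restrictScalars ℝ)]
  simp [← mul_assoc]

lemma wdz_conj_comp : wdz (fun w => conj (f w)) z = conj (wdzbar f z) := by
  rw [wdz, wdzbar, show (fun w => conj (f w)) = conjCLE ∘ f from rfl, conjCLE.comp_fderiv]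
  simp only [ContinuousLinearMap.comp_apply, ContinuousLinearEquiv.coe_coe, conjCLE_apply,
    map_mul, map_add, map_div₀, map_one, map_ofNat, conj_I]
  ring

lemma wdzbar_conj_comp : wdzbar (fun w => conj (f w)) z = conj (wdz f z) := by
  rw [wdz, wdzbar, show (fun w => conj (f w)) = conjCLE ∘ f from rfl, conjCLE.comp_fderiv]
  simp only [ContinuousLinearMap.comp_apply, ContinuousLinearEquiv.coe_coe, conjCLE_apply,
    map_mul, map_sub, map_div₀, map_one, map_ofNat, conj_I]
  ring

lemma wdz_conj : wdz (fun w => conj w) z = 0 := by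
  rw [wdz_conj_comp (f := fun w => w),
    wdzbar_eq_zero_of_differentiableAt differentiableAt_fun_id, map_zero]

end Wirtinger

section Gauss

variable {z : ℂ}

lemma gauss_eq_exp_neg_mul_conj : gauss = fun w => cexp (-w * conj w) := by
  funext w; rw [gauss, neg_mul, mul_conj]

@[fun_prop]
lemma differentiable_gauss : Differentiable ℝ gauss := by
  rw [gauss_eq_exp_neg_mul_conj]
  fun_prop

lemma conj_gauss : conj (gauss z) = gauss z := by
  rw [gauss, ← exp_conj, map_neg, conj_ofReal]

lemma wdz_gauss : wdz gauss z = -conj z * gauss z := by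
  rw [gauss_eq_exp_neg_mul_conj, wdz_comp differentiableAt_exp (by fun_prop), Complex.deriv_exp,
    wdz_mul (by fun_prop) (by fun_prop), wdz_conj, wdz_eq_deriv (by fun_prop), deriv_neg']
  ring

lemma wdzbar_gauss : wdzbar gauss z = -z * gauss z := by
  have h : gauss = fun w => conj (gauss w) := funext fun w => conj_gauss.symm
  rw [h, wdzbar_conj_comp, ← h, wdz_gauss, map_mul, map_neg, conj_conj, conj_gauss]

end Gauss

-- At `n = 0` the truncated `n - 1` is harmless: its coefficient is `0`.
def itoHermite : ℕ → ℕ → ℂ → ℂ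
  | 0, n, z => z ^ n
  | m + 1, n, z => conj z * itoHermite m n z - n * itoHermite m (n - 1) z

section ItoHermite

@[fun_prop]
lemma differentiable_itoHermite (m n : ℕ) : Differentiable ℝ (itoHermite m n) := by
  induction m generalizing n with
  | zero => exact fun z => by simp only [itoHermite]; fun_prop
  | succ m ih => exact fun z => by simp only [itoHermite]; fun_prop

lemma wdz_itoHermite (m n : ℕ) (z : ℂ) :
    wdz (itoHermite m n) z = n * itoHermite m (n - 1) z := by
  induction m generalizing n with
  | zero =>
    rw [show itoHermite 0 n = fun w => w ^ n from rfl, wdz_eq_deriv (by fun_prop)]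
    simp [itoHermite]
  | succ m ih =>
    rw [show itoHermite (m + 1) n
        = fun w => conj w * itoHermite m n w - n * itoHermite m (n - 1) w from rfl,
      wdz_sub (by fun_prop) (by fun_prop), wdz_mul (by fun_prop) (by fun_prop),
      wdz_mul (by fun_prop) (by fun_prop), wdz_conj, wdz_eq_deriv (differentiableAt_const _),
      deriv_const, ih, ih]
    simp only [itoHermite]
    ring

lemma mul_itoHermite (m n : ℕ) (z : ℂ) :
    z * itoHermite m n z = itoHermite m (n + 1) z + m * itoHermite (m - 1) n z := by
  induction m generalizing n with
  | zero => simp [itoHermite, pow_succ']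
  | succ m ih =>
    have hn : (n : ℂ) * itoHermite m (n - 1 + 1) z = n * itoHermite m n z := by
      rcases n with _ | n <;> simp
    have hm : (m : ℂ) * itoHermite m n z
        = m * (conj z * itoHermite (m - 1) n z - n * itoHermite (m - 1) (n - 1) z) := by
      rcases m with _ | m <;> simp [itoHermite]
    simp only [itoHermite, Nat.add_sub_cancel]
    push_cast
    linear_combination conj z * ih n - n * ih (n - 1) - hn - hm

end ItoHermite

lemma iterate_wdzbar_gauss (n : ℕ) :
    wdzbar^[n] gauss = fun z => (-1) ^ n * z ^ n * gauss z := by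
  induction n with
  | zero => simp
  | succ n ih =>
    funext z
    rw [Function.iterate_succ_apply', ih, wdzbar_mul (by fun_prop) (by fun_prop),
      wdzbar_eq_zero_of_differentiableAt (by fun_prop), wdzbar_gauss]
    ring

lemma iterate_wdz_iterate_wdzbar_gauss (m n : ℕ) :
    wdz^[m] (wdzbar^[n] gauss) = fun z => (-1) ^ (m + n) * itoHermite m n z * gauss z := by
  induction m with
  | zero => simp [iterate_wdzbar_gauss, itoHermite]
  | succ m ih =>
    funext z
    rw [Function.iterate_succ_apply', ih, wdz_mul (by fun_prop) (by fun_prop),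
      wdz_mul (by fun_prop) (by fun_prop), wdz_eq_deriv (differentiableAt_const _), deriv_const,
      wdz_itoHermite, wdz_gauss, itoHermite]
    ring

lemma Hpoly_eq_itoHermite (m n : ℕ) : Hpoly m n = itoHermite m n := by
  funext z
  have hexp : cexp (normSq z) * gauss z = 1 := by
    rw [gauss, ← Complex.exp_add, add_neg_cancel, Complex.exp_zero]
  have hsign : ((-1 : ℂ) ^ (m + n)) ^ 2 = 1 := by
    rw [← pow_mul, mul_comm, pow_mul, neg_one_sq, one_pow]
  simp only [Hpoly, iterate_wdz_iterate_wdzbar_gauss]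
  linear_combination ((-1 : ℂ) ^ (m + n)) ^ 2 * itoHermite m n z * hexp + itoHermite m n z * hsign

section Integrability

lemma norm_gauss (z : ℂ) : ‖gauss z‖ = Real.exp (-‖z‖ ^ 2) := by
  rw [gauss, norm_exp, ← ofReal_neg, ofReal_re, normSq_eq_norm_sq]

lemma integrable_exp_neg_mul_sq_norm {b : ℝ} (hb : 0 < b) :
    Integrable (fun z : ℂ => Real.exp (-b * ‖z‖ ^ 2)) := by
  refine Integrable.of_integral_ne_zero ?_
  rw [GaussianFourier.integral_rexp_neg_mul_sq_norm hb]
  positivity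

lemma one_add_pow_mul_exp_neg_sq_le {r : ℝ} (hr : 0 ≤ r) (N : ℕ) :
    (1 + r) ^ N * Real.exp (-r ^ 2)
      ≤ N.factorial * Real.exp (3 / 2) * Real.exp (-(1 / 2) * r ^ 2) := by
  have hpow : (1 + r) ^ N ≤ N.factorial * Real.exp (1 + r) := by
    have := Real.pow_div_factorial_le_exp (x := 1 + r) (by positivity) N
    rwa [div_le_iff₀ (by positivity), mul_comm] at this
  calc (1 + r) ^ N * Real.exp (-r ^ 2)
      ≤ N.factorial * Real.exp (1 + r) * Real.exp (-r ^ 2) := by gcongr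
    _ = N.factorial * Real.exp (1 + r - r ^ 2) := by
        rw [mul_assoc, ← Real.exp_add, sub_eq_add_neg]
    _ ≤ N.factorial * Real.exp (3 / 2 + -(1 / 2) * r ^ 2) := by
        gcongr; nlinarith [sq_nonneg (r - 1)]
    _ = N.factorial * Real.exp (3 / 2) * Real.exp (-(1 / 2) * r ^ 2) := by
        rw [Real.exp_add, mul_assoc]

lemma integrable_mul_gauss_of_norm_le {f : ℂ → ℂ} (hf : Continuous f) {C : ℝ} {N : ℕ}
    (hC : 0 ≤ C) (hbound : ∀ z, ‖f z‖ ≤ C * (1 + ‖z‖) ^ N) :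
    Integrable (fun z => f z * gauss z) := by
  refine ((integrable_exp_neg_mul_sq_norm one_half_pos).const_mul
    (C * (N.factorial * Real.exp (3 / 2)))).mono'
    (hf.mul differentiable_gauss.continuous).aestronglyMeasurable
    (Filter.Eventually.of_forall fun z => ?_)
  calc ‖f z * gauss z‖ ≤ C * (1 + ‖z‖) ^ N * Real.exp (-‖z‖ ^ 2) := by
        rw [norm_mul, norm_gauss]; gcongr; exact hbound z
    _ ≤ C * (N.factorial * Real.exp (3 / 2) * Real.exp (-(1 / 2) * ‖z‖ ^ 2)) := by
        rw [mul_assoc]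
        exact mul_le_mul_of_nonneg_left (one_add_pow_mul_exp_neg_sq_le (norm_nonneg z) N) hC
    _ = _ := by ring

lemma exists_norm_itoHermite_le (m n : ℕ) :
    ∃ C, 0 ≤ C ∧ ∀ z, ‖itoHermite m n z‖ ≤ C * (1 + ‖z‖) ^ (m + n) := by
  induction m generalizing n with
  | zero => exact ⟨1, zero_le_one, fun z => by simp only [itoHermite, norm_pow, zero_add, one_mul]; gcongr; simp⟩
  | succ m ih =>
    obtain ⟨C₁, hC₁, h₁⟩ := ih n
    obtain ⟨C₂, hC₂, h₂⟩ := ih (n - 1)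
    refine ⟨C₁ + n * C₂, by positivity, fun z => ?_⟩
    have hone : 1 ≤ 1 + ‖z‖ := le_add_of_nonneg_right (norm_nonneg z)
    calc ‖itoHermite (m + 1) n z‖
        ≤ ‖z‖ * (C₁ * (1 + ‖z‖) ^ (m + n)) + n * (C₂ * (1 + ‖z‖) ^ (m + (n - 1))) := by
          rw [itoHermite]
          refine (norm_sub_le _ _).trans ?_
          rw [norm_mul, norm_mul, RCLike.norm_conj, norm_natCast]
          gcongr
          exacts [h₁ z, h₂ z]
      _ ≤ (1 + ‖z‖) * (C₁ * (1 + ‖z‖) ^ (m + n)) + n * (C₂ * (1 + ‖z‖) ^ (m + 1 + n)) := by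
          gcongr
          · linarith
          all_goals omega
      _ = (C₁ + n * C₂) * (1 + ‖z‖) ^ (m + 1 + n) := by ring

@[fun_prop]
lemma continuous_itoHermite (m n : ℕ) : Continuous (itoHermite m n) :=
  (differentiable_itoHermite m n).continuous

lemma integrable_itoHermite_mul_conj_mul_gauss (m n j k : ℕ) :
    Integrable (fun z => itoHermite m n z * conj (itoHermite j k z) * gauss z) := by
  obtain ⟨C₁, hC₁, h₁⟩ := exists_norm_itoHermite_le m n
  obtain ⟨C₂, hC₂, h₂⟩ := exists_norm_itoHermite_le j k
  refine integrable_mul_gauss_of_norm_le (by fun_prop) (N := m + n + (j + k))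
    (mul_nonneg hC₁ hC₂) fun z => ?_
  rw [norm_mul, RCLike.norm_conj, pow_add, mul_mul_mul_comm]
  gcongr
  exacts [h₁ z, h₂ z]

end Integrability

section Moments

lemma integral_eq_zero_of_comp_rotation {f : ℂ → ℂ} (ω : Circle) {c : ℂ} (hc : c ≠ 1)
    (hf : ∀ z, f (ω * z) = c * f z) : ∫ z, f z = 0 := by
  have hrot : ∫ z, f (rotation ω z) = ∫ z, f z :=
    (rotation ω).measurePreserving.integral_comp (rotation ω).toHomeomorph.measurableEmbedding f
  simp only [rotation_apply, hf, integral_const_mul] at hrot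
  have hfix : (c - 1) * ∫ z, f z = 0 := by linear_combination hrot
  exact (mul_eq_zero.mp hfix).resolve_left (sub_ne_zero.mpr hc)

lemma integral_conj_pow_mul_pow_mul_gauss_self (a : ℕ) :
    ∫ z, conj z ^ a * z ^ a * gauss z = π * a.factorial := by
  have hpt : ∀ z : ℂ, conj z ^ a * z ^ a * gauss z
      = ((‖z‖ ^ ((2 * a : ℕ) : ℝ) * Real.exp (-‖z‖ ^ (2 : ℝ)) : ℝ) : ℂ) := by
    intro z
    rw [Real.rpow_natCast, Real.rpow_two, ← mul_pow, conj_mul', gauss, normSq_eq_norm_sq]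
    push_cast
    ring
  simp_rw [hpt]
  rw [integral_complex_ofReal, Complex.integral_rpow_mul_exp_neg_rpow one_le_two
    ((neg_lt_zero.mpr two_pos).trans_le (Nat.cast_nonneg _)),
    show ((2 * a : ℕ) + 2 : ℝ) / 2 = a + 1 by push_cast; ring, Real.Gamma_nat_eq_factorial]
  push_cast
  ring

lemma integral_conj_pow_mul_pow_mul_gauss_of_ne {a b : ℕ} (hab : a ≠ b) :
    ∫ z, conj z ^ a * z ^ b * gauss z = 0 := by
  set ω := Circle.exp (π / (b - a))
  have hba : (b - a : ℂ) ≠ 0 := sub_ne_zero.mpr (Nat.cast_injective.ne hab.symm)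
  have hω : conj (ω : ℂ) ^ a * (ω : ℂ) ^ b = -1 := by
    rw [Circle.coe_exp, ← exp_conj, map_mul, conj_ofReal, conj_I, ← exp_nat_mul, ← exp_nat_mul,
      ← exp_add, ← exp_pi_mul_I]
    congr 1
    push_cast
    field_simp
    ring
  refine integral_eq_zero_of_comp_rotation ω (c := -1) (by norm_num) fun z => ?_
  have hgauss : gauss (ω * z) = gauss z := by
    rw [gauss, gauss, normSq_mul, Circle.normSq_coe, one_mul]
  rw [hgauss, map_mul, mul_pow, mul_pow, ← hω]
  ring

end Moments

lemma factorial_delta_succ_left (m n j k : ℕ) :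
    (π : ℂ) * (m + 1).factorial * n.factorial * (if m + 1 = j ∧ n = k then 1 else 0)
      = π * m.factorial * n.factorial * (if m = j ∧ n = k + 1 then 1 else 0)
        + j * (π * m.factorial * n.factorial * (if m = j - 1 ∧ n = k then 1 else 0))
        - n * (π * m.factorial * (n - 1).factorial * (if m = j ∧ n - 1 = k then 1 else 0)) := by
  by_cases h₁ : m + 1 = j ∧ n = k
  · obtain ⟨rfl, rfl⟩ := h₁
    simp only [Nat.add_sub_cancel, Nat.factorial_succ, and_true, ↓reduceIte,
      Nat.left_eq_add, one_ne_zero, false_and, and_false]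
    push_cast
    ring
  by_cases h₂ : m = j ∧ n = k + 1
  · obtain ⟨rfl, rfl⟩ := h₂
    simp only [Nat.add_sub_cancel, Nat.factorial_succ, and_true, ↓reduceIte,
      Nat.add_eq_left, one_ne_zero, and_false]
    push_cast
    ring
  have hj : (j : ℂ) * (if m = j - 1 ∧ n = k then 1 else 0) = 0 := by
    rcases j with _ | j
    · simp
    · rw [if_neg (by omega), mul_zero]
  have hn : (n : ℂ) * (if m = j ∧ n - 1 = k then 1 else 0) = 0 := by
    rcases n with _ | n
    · simp
    · rw [if_neg (by omega), mul_zero]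
  rw [if_neg h₁, if_neg h₂]
  linear_combination (π * m.factorial * (n - 1).factorial : ℂ) * hn
    - (π * m.factorial * n.factorial : ℂ) * hj

def itoHermiteGram (m n j k : ℕ) : ℂ :=
  ∫ z, itoHermite m n z * conj (itoHermite j k z) * gauss z

lemma conj_itoHermiteGram (m n j k : ℕ) :
    conj (itoHermiteGram m n j k) = itoHermiteGram j k m n := by
  rw [itoHermiteGram, ← integral_conj]
  congr 1 with z
  rw [map_mul, map_mul, conj_conj, conj_gauss, mul_comm (conj _)]

lemma itoHermiteGram_zero_zero (n k : ℕ) :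
    itoHermiteGram 0 n 0 k = π * n.factorial * (if n = k then 1 else 0) := by
  simp only [itoHermiteGram, itoHermite, map_pow, mul_comm (_ ^ n) (_ ^ k)]
  rcases eq_or_ne k n with rfl | hne
  · simp [integral_conj_pow_mul_pow_mul_gauss_self]
  · simp [integral_conj_pow_mul_pow_mul_gauss_of_ne hne, hne.symm]

lemma itoHermiteGram_succ_left (m n j k : ℕ) :
    itoHermiteGram (m + 1) n j k = itoHermiteGram m n j (k + 1)
      + j * itoHermiteGram m n (j - 1) k - n * itoHermiteGram m (n - 1) j k := by
  have hpt : ∀ z, itoHermite (m + 1) n z * conj (itoHermite j k z) * gauss z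
      = itoHermite m n z * conj (itoHermite j (k + 1) z) * gauss z
        + j * (itoHermite m n z * conj (itoHermite (j - 1) k z) * gauss z)
        - n * (itoHermite m (n - 1) z * conj (itoHermite j k z) * gauss z) := by
    intro z
    have h := congrArg conj (mul_itoHermite j k z)
    simp only [map_mul, map_add, map_natCast] at h
    rw [itoHermite]
    linear_combination (itoHermite m n z * gauss z) * h
  have hint := integrable_itoHermite_mul_conj_mul_gauss
  simp only [itoHermiteGram, hpt]
  rw [integral_sub ?_ ((hint _ _ _ _).const_mul _),
    integral_add (hint _ _ _ _) ((hint _ _ _ _).const_mul _), integral_const_mul,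
    integral_const_mul]
  exact (hint _ _ _ _).add ((hint _ _ _ _).const_mul _)

lemma itoHermiteGram_eq_of_zero_right (m n k : ℕ) :
    itoHermiteGram m n 0 k
      = π * m.factorial * n.factorial * (if m = 0 ∧ n = k then 1 else 0) := by
  induction m generalizing n k with
  | zero => simp [itoHermiteGram_zero_zero]
  | succ m ih =>
    rw [itoHermiteGram_succ_left, factorial_delta_succ_left, Nat.zero_sub, ih, ih, ih]

lemma itoHermiteGram_eq (m n j k : ℕ) :
    itoHermiteGram m n j k
      = π * m.factorial * n.factorial * (if m = j ∧ n = k then 1 else 0) := by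
  induction m generalizing n j k with
  | zero =>
    rw [← conj_itoHermiteGram, itoHermiteGram_eq_of_zero_right]
    by_cases h : j = 0 ∧ k = n
    · obtain ⟨rfl, rfl⟩ := h
      simp
    · rw [if_neg h, if_neg (by omega)]
      simp
  | succ m ih =>
    rw [itoHermiteGram_succ_left, ih, ih, ih, factorial_delta_succ_left]

/-- Orthogonality of the Itô–Hermite polynomials in `L²(ℂ, e^{-|z|²} dλ)`. -/
theorem stmt2 (m n j k : ℕ) :
    ∫ z : ℂ, Hpoly m n z * (starRingEnd ℂ) (Hpoly j k z) * gauss z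
      = (Real.pi : ℂ) * (m.factorial : ℂ) * (n.factorial : ℂ) *
        (if m = j ∧ n = k then 1 else 0) := by
  rw [Hpoly_eq_itoHermite, Hpoly_eq_itoHermite]
  exact itoHermiteGram_eq m n j k
end
end

section
/- The weighted planar Cauchy transform C f(z) := (1/π) ∫_ℂ f(ξ)/(z - ξ) · e^{-|ξ|²} dλ(ξ) defines a bounded linear operator from L²(ℂ, e^{-|z|²} dλ) to itself. -/
/-!
Pointwise `|C f(z)| ≤ π⁻¹ ∫ |f(ξ)| |z - ξ|⁻¹ dμ(ξ)`, where `μ` is the Gaussian measure, so it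
suffices to bound the integral operator with the positive symmetric kernel `|z - ξ|⁻¹` on `L²(μ)`.
Its row integrals are uniformly bounded: on the unit disc around `z` the density `e^{-|ξ|²}` is at
most `1` and `|ξ|⁻¹` is locally integrable in the plane, while off that disc the kernel is at most
`1` and `μ` is finite. The Schur test with constant test functions (Cauchy–Schwarz against the
kernel, then Tonelli) turns uniformly bounded row and column integrals into an `L²` bound.
-/

open MeasureTheory Complex Finset

noncomputable section

open Function Metric Set
open scoped ENNReal

section SchurTest

variable {α β : Type*} [MeasurableSpace α] [MeasurableSpace β] {μ : Measure α} {ν : Measure β}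

theorem ENNReal.sq_lintegral_mul_le {f g : β → ℝ≥0∞} (hf : AEMeasurable f ν)
    (hg : AEMeasurable g ν) :
    (∫⁻ y, f y * g y ∂ν) ^ 2 ≤ (∫⁻ y, f y ∂ν) * ∫⁻ y, f y * g y ^ 2 ∂ν := by
  have hsqrt : ∀ a : ℝ≥0∞, (a ^ 2) ^ (1 / 2 : ℝ) = a := fun a => by
    rw [← ENNReal.rpow_natCast, ← ENNReal.rpow_mul]; norm_num
  have hfg : ∀ y, f y * g y = f y ^ (1 / 2 : ℝ) * (f y * g y ^ 2) ^ (1 / 2 : ℝ) := fun y => by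
    rw [← ENNReal.mul_rpow_of_nonneg _ _ (by norm_num), ← hsqrt (f y * g y)]
    ring_nf
  calc (∫⁻ y, f y * g y ∂ν) ^ 2
      ≤ ((∫⁻ y, f y ∂ν) ^ (1 / 2 : ℝ) * (∫⁻ y, f y * g y ^ 2 ∂ν) ^ (1 / 2 : ℝ)) ^ 2 := by
        simp_rw [hfg]
        gcongr
        exact ENNReal.lintegral_mul_norm_pow_le hf (hf.mul (hg.pow_const 2)) (by norm_num)
          (by norm_num) (by norm_num)
    _ = (∫⁻ y, f y ∂ν) * ∫⁻ y, f y * g y ^ 2 ∂ν := by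
        rw [← ENNReal.mul_rpow_of_nonneg _ _ (by norm_num), ← ENNReal.rpow_natCast,
          ← ENNReal.rpow_mul]
        norm_num

theorem lintegral_sq_lintegral_mul_le [SFinite μ] [SFinite ν] {K : α → β → ℝ≥0∞}
    (hK : Measurable (uncurry K)) {g : β → ℝ≥0∞} (hg : AEMeasurable g ν) {A B : ℝ≥0∞}
    (hrow : ∀ x, ∫⁻ y, K x y ∂ν ≤ A) (hcol : ∀ y, ∫⁻ x, K x y ∂μ ≤ B) :
    ∫⁻ x, (∫⁻ y, K x y * g y ∂ν) ^ 2 ∂μ ≤ A * B * ∫⁻ y, g y ^ 2 ∂ν := by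
  have hKg : AEMeasurable (uncurry fun x y => K x y * g y ^ 2) (μ.prod ν) :=
    hK.aemeasurable.mul (hg.pow_const 2).comp_snd
  calc ∫⁻ x, (∫⁻ y, K x y * g y ∂ν) ^ 2 ∂μ
      ≤ ∫⁻ x, A * ∫⁻ y, K x y * g y ^ 2 ∂ν ∂μ := lintegral_mono fun x =>
        (ENNReal.sq_lintegral_mul_le hK.of_uncurry_left.aemeasurable hg).trans
          (mul_le_mul_left (hrow x) _)
    _ = A * ∫⁻ y, g y ^ 2 * ∫⁻ x, K x y ∂μ ∂ν := by
        rw [lintegral_const_mul'' _ hKg.lintegral_prod_right, lintegral_lintegral_swap hKg]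
        congr 1
        refine lintegral_congr fun y => ?_
        rw [← lintegral_const_mul _ hK.of_uncurry_right]
        simp_rw [mul_comm]
    _ ≤ A * ∫⁻ y, g y ^ 2 * B ∂ν := by gcongr with y; exact hcol y
    _ = A * B * ∫⁻ y, g y ^ 2 ∂ν := by rw [lintegral_mul_const'' _ (hg.pow_const 2)]; ring

theorem sq_eLpNorm_two {E : Type*} [NormedAddCommGroup E] (f : α → E) :
    eLpNorm f 2 μ ^ 2 = ∫⁻ x, ‖f x‖ₑ ^ 2 ∂μ := by
  simpa using eLpNorm_nnreal_pow_eq_lintegral (f := f) (μ := μ) (p := 2) two_ne_zero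

theorem sq_eLpNorm_two_le_of_enorm_le_lintegral_mul {E F : Type*} [NormedAddCommGroup E]
    [NormedAddCommGroup F] [SFinite μ] [SFinite ν]
    {K : α → β → ℝ≥0∞} (hK : Measurable (uncurry K)) {A B : ℝ≥0∞}
    (hrow : ∀ x, ∫⁻ y, K x y ∂ν ≤ A) (hcol : ∀ y, ∫⁻ x, K x y ∂μ ≤ B) {T : α → E} {f : β → F}
    (hf : AEStronglyMeasurable f ν) (hT : ∀ x, ‖T x‖ₑ ≤ ∫⁻ y, K x y * ‖f y‖ₑ ∂ν) :
    eLpNorm T 2 μ ^ 2 ≤ A * B * eLpNorm f 2 ν ^ 2 := by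
  rw [sq_eLpNorm_two, sq_eLpNorm_two]
  calc ∫⁻ x, ‖T x‖ₑ ^ 2 ∂μ ≤ ∫⁻ x, (∫⁻ y, K x y * ‖f y‖ₑ ∂ν) ^ 2 ∂μ := by
        gcongr with x; exact hT x
    _ ≤ _ := lintegral_sq_lintegral_mul_le hK hf.enorm hrow hcol

end SchurTest

theorem lintegral_ball_enorm_inv_lt_top : ∫⁻ w in ball (0 : ℂ) 1, ‖w⁻¹‖ₑ < ∞ :=
  (integrableOn_ball_of_norm_le_rpow (μ := volume) (f := fun w : ℂ => w⁻¹) (C := 1) (α := 1)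
    (by simp) (by simp) (Filter.Eventually.of_forall fun w => by simp [Real.rpow_neg_one])
    measurable_inv.aestronglyMeasurable).2

theorem lintegral_ball_enorm_inv_sub (z : ℂ) :
    ∫⁻ ξ in ball z 1, ‖(z - ξ)⁻¹‖ₑ = ∫⁻ w in ball (0 : ℂ) 1, ‖w⁻¹‖ₑ := by
  rw [← lintegral_indicator measurableSet_ball, ← lintegral_indicator measurableSet_ball,
    ← lintegral_sub_left_eq_self ((ball (0 : ℂ) 1).indicator fun w => ‖w⁻¹‖ₑ) z]
  congr 1 with ξ
  simp only [indicator, mem_ball, dist_eq_norm, sub_zero, norm_sub_rev]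

theorem lintegral_enorm_inv_sub_le {μ : Measure ℂ} (hμ : μ ≤ volume) (z : ℂ) :
    ∫⁻ ξ, ‖(z - ξ)⁻¹‖ₑ ∂μ ≤ (∫⁻ w in ball (0 : ℂ) 1, ‖w⁻¹‖ₑ) + μ univ := by
  have hsplit : ∀ ξ, ‖(z - ξ)⁻¹‖ₑ ≤ (ball z 1).indicator (fun ξ => ‖(z - ξ)⁻¹‖ₑ) ξ + 1 := by
    intro ξ
    by_cases hξ : ξ ∈ ball z 1
    · simp [indicator_of_mem hξ]
    · have h1 : 1 ≤ ‖z - ξ‖ := by simpa [dist_eq_norm, norm_sub_rev] using hξ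
      rw [indicator_of_notMem hξ, zero_add, ← ofReal_norm, norm_inv]
      exact ENNReal.ofReal_le_one.2 (inv_le_one_of_one_le₀ h1)
  calc ∫⁻ ξ, ‖(z - ξ)⁻¹‖ₑ ∂μ
      ≤ ∫⁻ ξ, (ball z 1).indicator (fun ξ => ‖(z - ξ)⁻¹‖ₑ) ξ + 1 ∂μ := lintegral_mono hsplit
    _ = ∫⁻ ξ, (ball z 1).indicator (fun ξ => ‖(z - ξ)⁻¹‖ₑ) ξ ∂μ + μ univ := by
        rw [lintegral_add_right _ measurable_const, lintegral_one]
    _ ≤ (∫⁻ ξ, (ball z 1).indicator (fun ξ => ‖(z - ξ)⁻¹‖ₑ) ξ) + μ univ :=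
        add_le_add (lintegral_mono' hμ le_rfl) le_rfl
    _ = _ := by rw [lintegral_indicator measurableSet_ball, lintegral_ball_enorm_inv_sub z]

theorem integrable_gauss : Integrable gauss := by
  convert GaussianFourier.integrable_cexp_neg_mul_sq_norm_add (V := ℂ) (b := 1) (by simp) 0 0
    using 2 with z
  simp [gauss, Complex.normSq_eq_norm_sq]

theorem continuous_gauss : Continuous gauss := by
  unfold gauss; fun_prop

theorem enorm_gauss (z : ℂ) : ‖gauss z‖ₑ = ENNReal.ofReal (Real.exp (-Complex.normSq z)) := by
  rw [← ofReal_norm, gauss, Complex.norm_exp]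
  simp

theorem gaussMeasure_eq_withDensity : gaussMeasure = volume.withDensity fun z => ‖gauss z‖ₑ := by
  simp only [enorm_gauss, gaussMeasure]

instance : IsFiniteMeasure gaussMeasure := by
  rw [gaussMeasure_eq_withDensity]
  exact isFiniteMeasure_withDensity integrable_gauss.2.ne

theorem gaussMeasure_le_volume : gaussMeasure ≤ volume := by
  conv_rhs => rw [← withDensity_one (μ := volume)]
  refine withDensity_mono (Filter.Eventually.of_forall fun z => ?_)
  simpa using Complex.normSq_nonneg z

theorem volume_absolutelyContinuous_gaussMeasure : volume ≪ gaussMeasure :=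
  withDensity_absolutelyContinuous' (by fun_prop)
    (Filter.Eventually.of_forall fun z => by simp [Real.exp_pos])

theorem enorm_cauchyT_le (f : ℂ → ℂ) (z : ℂ) :
    ‖cauchyT f z‖ₑ ≤ ∫⁻ ξ, ‖(Real.pi : ℂ)⁻¹‖ₑ * ‖(z - ξ)⁻¹‖ₑ * ‖f ξ‖ₑ ∂gaussMeasure := by
  rw [gaussMeasure_eq_withDensity, lintegral_withDensity_eq_lintegral_mul_non_measurable _
    continuous_gauss.measurable.enorm (Filter.Eventually.of_forall fun _ => enorm_lt_top), cauchyT,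
    ← integral_const_mul]
  refine (enorm_integral_le_lintegral_enorm _).trans_eq (lintegral_congr fun ξ => ?_)
  simp only [Pi.mul_apply, enorm_mul, div_eq_mul_inv, one_mul]
  ring

theorem aestronglyMeasurable_cauchyT {f : ℂ → ℂ} (hf : AEStronglyMeasurable f gaussMeasure) :
    AEStronglyMeasurable (cauchyT f) gaussMeasure := by
  have hf' : AEStronglyMeasurable f volume := hf.mono_ac volume_absolutelyContinuous_gaussMeasure
  have hF : AEStronglyMeasurable (fun p : ℂ × ℂ => f p.2 / (p.1 - p.2) * gauss p.2)
      (volume.prod volume) :=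
    ((hf'.comp_quasiMeasurePreserving Measure.quasiMeasurePreserving_snd).div₀
      (by fun_prop)).mul (continuous_gauss.comp continuous_snd).aestronglyMeasurable
  refine (hF.integral_prod_right'.const_mul _).mono_ac ?_
  rw [gaussMeasure_eq_withDensity]
  exact withDensity_absolutelyContinuous _ _

/-- The weighted planar Cauchy transform is bounded on `L²(ℂ, e^{-|z|²} dλ)`. -/
theorem stmt7 :
    ∃ C : ℝ, 0 ≤ C ∧ ∀ f : ℂ → ℂ, MemLp f 2 gaussMeasure →
      MemLp (cauchyT f) 2 gaussMeasure ∧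
      eLpNorm (cauchyT f) 2 gaussMeasure ≤ ENNReal.ofReal C * eLpNorm f 2 gaussMeasure := by
  set M := ‖(Real.pi : ℂ)⁻¹‖ₑ * ((∫⁻ w in ball (0 : ℂ) 1, ‖w⁻¹‖ₑ) + gaussMeasure univ)
  have hM : M ≠ ∞ := ENNReal.mul_ne_top enorm_ne_top
    (ENNReal.add_ne_top.2 ⟨lintegral_ball_enorm_inv_lt_top.ne, measure_ne_top _ _⟩)
  have hrow (z : ℂ) : ∫⁻ ξ, ‖(Real.pi : ℂ)⁻¹‖ₑ * ‖(z - ξ)⁻¹‖ₑ ∂gaussMeasure ≤ M := by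
    rw [lintegral_const_mul' _ _ enorm_ne_top]
    exact mul_le_mul_right (lintegral_enorm_inv_sub_le gaussMeasure_le_volume z) _
  have hcol (ξ : ℂ) : ∫⁻ z, ‖(Real.pi : ℂ)⁻¹‖ₑ * ‖(z - ξ)⁻¹‖ₑ ∂gaussMeasure ≤ M := by
    simpa only [← neg_sub ξ, inv_neg, enorm_neg] using hrow ξ
  refine ⟨M.toReal, ENNReal.toReal_nonneg, fun f hf => ?_⟩
  have hbound : eLpNorm (cauchyT f) 2 gaussMeasure ≤ M * eLpNorm f 2 gaussMeasure := by
    refine (ENNReal.pow_le_pow_left_iff two_ne_zero).1 ?_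
    rw [mul_pow, sq M]
    exact sq_eLpNorm_two_le_of_enorm_le_lintegral_mul (by fun_prop) hrow hcol hf.1
      (enorm_cauchyT_le f)
  rw [ENNReal.ofReal_toReal hM]
  exact ⟨⟨aestronglyMeasurable_cauchyT hf.1, hbound.trans_lt (ENNReal.mul_lt_top hM.lt_top hf.2)⟩,
    hbound⟩
end
end

section
/- The weighted Cauchy transform of f(ξ) = ξ satisfies (1/π) ∫_ℂ ξ/(z - ξ) e^{-|ξ|²} dλ(ξ) = -e^{-|z|²}, for all z ∈ ℂ. -/
open MeasureTheory Complex Finset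

noncomputable section

section AuxStmt16
open Set Filter intervalIntegral Metric


/-- Integrability transfer for real polar coordinates. -/
lemma integrableOn_polar_iff {E : Type*} [NormedAddCommGroup E] [NormedSpace ℝ E]
    (f : ℝ × ℝ → E) :
    IntegrableOn (fun p => p.1 • f (polarCoord.symm p)) polarCoord.target ↔ Integrable f := by
  set B : ℝ × ℝ → ℝ × ℝ →L[ℝ] ℝ × ℝ := fun p =>
    LinearMap.toContinuousLinearMap (Matrix.toLin (Module.Basis.finTwoProd ℝ) (Module.Basis.finTwoProd ℝ)
      !![Real.cos p.2, -p.1 * Real.sin p.2; Real.sin p.2, p.1 * Real.cos p.2])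
  have A : ∀ p ∈ polarCoord.target, HasFDerivWithinAt polarCoord.symm (B p) polarCoord.target p :=
    fun p _ => (hasFDerivAt_polarCoord_symm p).hasFDerivWithinAt
  have B_det : ∀ p, (B p).det = p.1 := by
    intro p
    conv_rhs => rw [← one_mul p.1, ← Real.cos_sq_add_sin_sq p.2]
    simp only [B, neg_mul, LinearMap.det_toContinuousLinearMap, LinearMap.det_toLin,
      Matrix.det_fin_two_of, sub_neg_eq_add]
    ring
  have inj : InjOn polarCoord.symm polarCoord.target := polarCoord.symm.injOn
  have h1 := integrableOn_image_iff_integrableOn_abs_det_fderiv_smul volume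
    polarCoord.open_target.measurableSet A inj f
  rw [polarCoord.symm_image_target_eq_source] at h1
  have h2 : IntegrableOn f polarCoord.source ↔ Integrable f := by
    rw [IntegrableOn, Measure.restrict_congr_set polarCoord_source_ae_eq_univ,
      Measure.restrict_univ]
  rw [← h2, h1]
  constructor <;> intro h <;> apply h.congr_fun ?_ polarCoord.open_target.measurableSet <;>
    intro p hp <;> simp only [B_det, abs_of_pos (show 0 < p.1 from hp.1)]

/-- Integrability transfer for complex polar coordinates. -/
lemma integrableOn_polarC_iff {E : Type*} [NormedAddCommGroup E] [NormedSpace ℝ E]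
    (f : ℂ → E) :
    IntegrableOn (fun p => p.1 • f (Complex.polarCoord.symm p)) polarCoord.target ↔
      Integrable f := by
  have hmp : MeasurePreserving (⇑Complex.measurableEquivRealProd.symm)
      (volume : Measure (ℝ × ℝ)) (volume : Measure ℂ) :=
    MeasurePreserving.symm _ Complex.volume_preserving_equiv_real_prod
  rw [← hmp.integrable_comp_emb Complex.measurableEquivRealProd.symm.measurableEmbedding,
    ← integrableOn_polar_iff (f ∘ Complex.measurableEquivRealProd.symm)]
  rfl


/-- `‖ξ‖⁻¹` is integrable on the unit ball of `ℂ`. -/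
lemma integrableOn_inv_norm_ball : IntegrableOn (fun ξ : ℂ => ‖ξ‖⁻¹) (Metric.ball 0 1) := by
  rw [← integrable_indicator_iff measurableSet_ball,
    ← integrableOn_polarC_iff ((Metric.ball (0:ℂ) 1).indicator (fun ξ => ‖ξ‖⁻¹))]
  have hsymm : Measurable (fun p : ℝ × ℝ => Complex.polarCoord.symm p) := by
    simp_rw [Complex.polarCoord_symm_apply]
    fun_prop
  have hf : Measurable ((Metric.ball (0:ℂ) 1).indicator (fun ξ => ‖ξ‖⁻¹)) :=
    (measurable_norm.inv).indicator measurableSet_ball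
  have hmeas : Measurable (fun p : ℝ × ℝ =>
      p.1 • (Metric.ball (0:ℂ) 1).indicator (fun ξ => ‖ξ‖⁻¹) (Complex.polarCoord.symm p)) :=
    measurable_fst.smul (hf.comp hsymm)
  have hfin : volume (Ioo (0:ℝ) 1 ×ˢ Ioo (-Real.pi) Real.pi) < ⊤ := by
    rw [Measure.volume_eq_prod ℝ ℝ, Measure.prod_prod, Real.volume_Ioo, Real.volume_Ioo]
    exact ENNReal.mul_lt_top ENNReal.ofReal_lt_top ENNReal.ofReal_lt_top
  have hg : Integrable ((Ioo (0:ℝ) 1 ×ˢ Ioo (-Real.pi) Real.pi).indicator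
      (fun _ : ℝ × ℝ => (1:ℝ))) := by
    rw [integrable_indicator_iff (measurableSet_Ioo.prod measurableSet_Ioo)]
    exact integrableOn_const hfin.ne
  refine Integrable.mono' hg.integrableOn hmeas.aestronglyMeasurable ?_
  rw [ae_restrict_iff' polarCoord.open_target.measurableSet]
  refine Filter.Eventually.of_forall (fun p hp => ?_)
  have hp1 : 0 < p.1 := hp.1
  have habs : ‖Complex.polarCoord.symm p‖ = p.1 := by
    rw [Complex.norm_polarCoord_symm, abs_of_pos hp1]
  by_cases hlt : p.1 < 1
  · have hmem : Complex.polarCoord.symm p ∈ Metric.ball (0:ℂ) 1 := by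
      simpa [Metric.mem_ball, Complex.dist_eq, habs, abs_of_pos hp1] using hlt
    rw [indicator_of_mem hmem, indicator_of_mem (by exact ⟨⟨hp1, hlt⟩, hp.2⟩)]
    simp only [smul_eq_mul, norm_mul, Real.norm_eq_abs, abs_of_pos hp1, norm_inv,
      habs, abs_of_pos hp1]
    rw [mul_inv_cancel₀ hp1.ne']
  · have hmem : Complex.polarCoord.symm p ∉ Metric.ball (0:ℂ) 1 := by
      simpa [Metric.mem_ball, Complex.dist_eq, habs, abs_of_pos hp1] using hlt
    rw [indicator_of_notMem hmem, indicator_of_notMem (by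
      intro hmem'; exact hlt hmem'.1.2)]
    simp

/-- `‖ξ - z‖⁻¹` is integrable on `ball z 1`. -/
lemma integrableOn_inv_norm_sub_ball (z : ℂ) :
    IntegrableOn (fun ξ : ℂ => ‖ξ - z‖⁻¹) (Metric.ball z 1) := by
  have hmp : MeasurePreserving (fun ξ : ℂ => ξ + z) volume volume :=
    measurePreserving_add_right volume z
  have hemb : MeasurableEmbedding (fun ξ : ℂ => ξ + z) :=
    (MeasurableEquiv.addRight z).measurableEmbedding
  have hpre : (fun ξ : ℂ => ξ + z) ⁻¹' (Metric.ball z 1) = Metric.ball 0 1 := by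
    ext ξ; simp [Metric.mem_ball, dist_eq_norm]
  refine (hmp.integrableOn_comp_preimage hemb (f := fun ξ : ℂ => ‖ξ - z‖⁻¹)).mp ?_
  rw [hpre]
  have : ((fun ξ : ℂ => ‖ξ - z‖⁻¹) ∘ fun ξ : ℂ => ξ + z) = fun ξ : ℂ => ‖ξ‖⁻¹ := by
    funext ξ; simp [Function.comp, add_sub_cancel_right]
  rw [this]
  exact integrableOn_inv_norm_ball


lemma gauss_norm (ξ : ℂ) : ‖gauss ξ‖ = Real.exp (-‖ξ‖^2) := by
  simp [gauss, Complex.norm_exp, Complex.sq_norm]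

lemma gauss_norm_le_one (ξ : ℂ) : ‖gauss ξ‖ ≤ 1 := by
  rw [gauss_norm, Real.exp_le_one_iff]
  exact neg_nonpos.mpr (by positivity)

/-- The Gaussian integrand with Cauchy kernel is integrable. -/
lemma integrable_F (z : ℂ) : Integrable (fun ξ : ℂ => ξ / (z - ξ) * gauss ξ) := by
  have hmeasg : Measurable gauss := by
    have : Continuous gauss :=
      Complex.continuous_exp.comp ((Complex.continuous_ofReal.comp Complex.continuous_normSq).neg)
    exact this.measurable
  have hmeas : Measurable (fun ξ : ℂ => ξ / (z - ξ) * gauss ξ) := by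
    simp_rw [div_eq_mul_inv]
    exact (measurable_id.mul ((measurable_const.sub measurable_id).inv)).mul hmeasg
  rw [← integrableOn_univ, ← union_compl_self (Metric.ball z 1)]
  apply IntegrableOn.union
  · refine Integrable.mono' (((integrableOn_inv_norm_sub_ball z).const_mul (‖z‖ + 1)))
      hmeas.aestronglyMeasurable.restrict ?_
    rw [ae_restrict_iff' measurableSet_ball]
    refine Filter.Eventually.of_forall (fun ξ hξ => ?_)
    have hξz : ‖ξ - z‖ < 1 := by rwa [Metric.mem_ball, Complex.dist_eq] at hξ
    have h1 : ‖ξ‖ ≤ ‖z‖ + 1 := by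
      calc ‖ξ‖ = ‖z + (ξ - z)‖ := by ring_nf
      _ ≤ ‖z‖ + ‖ξ - z‖ := norm_add_le _ _
      _ ≤ ‖z‖ + 1 := by linarith
    rw [norm_mul, norm_div]
    calc ‖ξ‖ / ‖z - ξ‖ * ‖gauss ξ‖ ≤ ‖ξ‖ / ‖z - ξ‖ * 1 := by
          apply mul_le_mul_of_nonneg_left (gauss_norm_le_one ξ); positivity
      _ = ‖ξ‖ * ‖ξ - z‖⁻¹ := by rw [mul_one, div_eq_mul_inv, norm_sub_rev]
      _ ≤ (‖z‖ + 1) * ‖ξ - z‖⁻¹ := by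
          apply mul_le_mul_of_nonneg_right h1; positivity
  · -- on the complement of the ball, dominate by exp (-(1/2) ‖ξ‖²)
    have hint : Integrable (fun ξ : ℂ => Real.exp (-(1/2) * ‖ξ‖^2)) := by
      have h := (GaussianFourier.integrable_cexp_neg_mul_sq_norm_add (V := ℂ)
        (b := (1/2 : ℂ)) (by norm_num) 0 0).norm
      refine h.congr (Filter.Eventually.of_forall (fun ξ => ?_))
      have e1 : (-(1/2 : ℂ) * ((‖ξ‖:ℝ):ℂ)^2 + 0 * (((inner ℝ (0:ℂ) ξ : ℝ)):ℂ))
          = ((-(1/2) * ‖ξ‖^2 : ℝ) : ℂ) := by push_cast; ring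
      simp only []
      rw [e1, Complex.norm_exp, Complex.ofReal_re]
    refine Integrable.mono' hint.integrableOn hmeas.aestronglyMeasurable.restrict ?_
    rw [ae_restrict_iff' measurableSet_ball.compl]
    refine Filter.Eventually.of_forall (fun ξ hξ => ?_)
    have hξz : (1:ℝ) ≤ ‖z - ξ‖ := by
      rw [mem_compl_iff, Metric.mem_ball, not_lt, Complex.dist_eq,
        norm_sub_rev] at hξ
      exact hξ
    rw [norm_mul, norm_div, gauss_norm]
    have key : ‖ξ‖ * Real.exp (-‖ξ‖^2) ≤ Real.exp (-(1/2) * ‖ξ‖^2) := by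
      have h1 : ‖ξ‖ ≤ Real.exp ((1/2) * ‖ξ‖^2) := by
        calc ‖ξ‖ ≤ (1/2) * ‖ξ‖^2 + 1 := by nlinarith [sq_nonneg (‖ξ‖ - 1)]
        _ ≤ Real.exp ((1/2) * ‖ξ‖^2) := by
            have := Real.add_one_le_exp ((1/2) * ‖ξ‖^2); linarith
      calc ‖ξ‖ * Real.exp (-‖ξ‖^2) ≤ Real.exp ((1/2) * ‖ξ‖^2) * Real.exp (-‖ξ‖^2) := by
            apply mul_le_mul_of_nonneg_right h1; positivity
        _ = Real.exp (-(1/2) * ‖ξ‖^2) := by rw [← Real.exp_add]; ring_nf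
    calc ‖ξ‖ / ‖z - ξ‖ * Real.exp (-‖ξ‖^2) ≤ ‖ξ‖ / 1 * Real.exp (-‖ξ‖^2) := by
          apply mul_le_mul_of_nonneg_right ?_ (Real.exp_nonneg _)
          exact div_le_div_of_nonneg_left (norm_nonneg _) one_pos hξz
      _ = ‖ξ‖ * Real.exp (-‖ξ‖^2) := by rw [div_one]
      _ ≤ Real.exp (-(1/2) * ‖ξ‖^2) := key


/-- The angular integral of the Cauchy kernel integrand. -/
lemma angular_eq_circleIntegral (z : ℂ) {r : ℝ} (hr : 0 < r) :
    (∫ θ in Ioo (-Real.pi) Real.pi, circleMap 0 r θ / (z - circleMap 0 r θ)) =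
      I * ∮ ξ in C(0, r), (ξ - z)⁻¹ := by
  have hper : Function.Periodic (fun θ => circleMap 0 r θ / (z - circleMap 0 r θ)) (2 * Real.pi) :=
    (periodic_circleMap 0 r).comp (fun ξ => ξ / (z - ξ))
  have h1 : (∫ θ in Ioo (-Real.pi) Real.pi, circleMap 0 r θ / (z - circleMap 0 r θ)) =
      ∫ θ in (-Real.pi)..(Real.pi), circleMap 0 r θ / (z - circleMap 0 r θ) := by
    rw [intervalIntegral.integral_of_le (by linarith [Real.pi_pos]), integral_Ioc_eq_integral_Ioo]
  have h2 : (∫ θ in (-Real.pi)..(Real.pi), circleMap 0 r θ / (z - circleMap 0 r θ)) =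
      ∫ θ in (0:ℝ)..(2*Real.pi), circleMap 0 r θ / (z - circleMap 0 r θ) := by
    have := hper.intervalIntegral_add_eq (-Real.pi) 0
    rw [show -Real.pi + 2*Real.pi = Real.pi by ring, zero_add] at this
    exact this
  rw [h1, h2, circleIntegral]
  rw [← intervalIntegral.integral_const_mul]
  apply intervalIntegral.integral_congr
  intro θ _
  simp only [deriv_circleMap, smul_eq_mul]
  set w := circleMap 0 r θ with hw
  by_cases hwz : w = z
  · rw [← hwz, sub_self, inv_zero, div_zero]
    ring
  · have hne : z - w ≠ 0 := sub_ne_zero.mpr (Ne.symm hwz)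
    have hne' : w - z ≠ 0 := sub_ne_zero.mpr hwz
    field_simp
    ring_nf
    rw [I_sq]
    ring

lemma angular_value_lt (z : ℂ) {r : ℝ} (hr : 0 < r) (hlt : r < ‖z‖) :
    (∫ θ in Ioo (-Real.pi) Real.pi, circleMap 0 r θ / (z - circleMap 0 r θ)) = 0 := by
  rw [angular_eq_circleIntegral z hr]
  have : (∮ ξ in C(0, r), (ξ - z)⁻¹) = 0 := by
    apply circleIntegral_eq_zero_of_differentiable_on_off_countable hr.le countable_empty
    · intro ξ hξ
      apply ContinuousAt.continuousWithinAt
      have : ξ - z ≠ 0 := by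
        rw [sub_ne_zero]
        intro h
        rw [h] at hξ
        rw [Metric.mem_closedBall, Complex.dist_eq, sub_zero] at hξ
        linarith
      exact (continuousAt_id.sub continuousAt_const).inv₀ this
    · intro ξ hξ
      have hξ' : ‖ξ‖ < ‖z‖ := by
        have := hξ.1
        rw [Metric.mem_ball, Complex.dist_eq, sub_zero] at this
        exact lt_trans this hlt
      have : ξ - z ≠ 0 := by
        rw [sub_ne_zero]; intro h; rw [h] at hξ'; exact lt_irrefl _ hξ'
      exact ((differentiableAt_id.sub_const z).inv this)
  rw [this, mul_zero]

lemma angular_value_gt (z : ℂ) {r : ℝ} (hr : 0 < r) (hgt : ‖z‖ < r) :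
    (∫ θ in Ioo (-Real.pi) Real.pi, circleMap 0 r θ / (z - circleMap 0 r θ)) =
      -(2 * Real.pi) := by
  rw [angular_eq_circleIntegral z hr,
    circleIntegral.integral_sub_inv_of_mem_ball (by simpa [Complex.dist_eq] using hgt)]
  rw [show (I : ℂ) * (2 * Real.pi * I) = 2 * Real.pi * (I*I) by ring, I_mul_I]
  norm_num


lemma radial_real (a : ℝ) :
    ∫ r in Ioi a, r * Real.exp (-r^2) = Real.exp (-a^2) / 2 := by
  have hderiv : ∀ x ∈ Ioi a, HasDerivAt (fun r => -Real.exp (-r^2) / 2)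
      (x * Real.exp (-x^2)) x := by
    intro x _
    have h1 : HasDerivAt (fun r : ℝ => -r^2) (-(2*x)) x := by
      simpa using (hasDerivAt_pow 2 x).fun_neg
    have h2 := (Real.hasDerivAt_exp (-x^2)).comp x h1
    have h3 := h2.neg.div_const 2
    exact h3.congr_deriv (by ring)
  have hint : IntegrableOn (fun r : ℝ => r * Real.exp (-r^2)) (Ioi a) := by
    have := integrable_mul_exp_neg_mul_sq (b := 1) one_pos
    simpa using this.integrableOn
  have htend : Tendsto (fun r : ℝ => -Real.exp (-r^2) / 2) atTop (nhds 0) := by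
    have h1 : Tendsto (fun r : ℝ => -r^2) atTop atBot :=
      tendsto_neg_atTop_atBot.comp (tendsto_pow_atTop two_ne_zero)
    have h2 : Tendsto (fun r : ℝ => Real.exp (-r^2)) atTop (nhds 0) :=
      Real.tendsto_exp_atBot.comp h1
    have := h2.neg.div_const 2
    simpa using this
  have hcont : ContinuousWithinAt (fun r : ℝ => -Real.exp (-r^2) / 2) (Ici a) a := by
    apply Continuous.continuousWithinAt
    fun_prop
  rw [integral_Ioi_of_hasDerivAt_of_tendsto hcont hderiv hint htend]
  ring

lemma radial_complex (a : ℝ) :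
    (∫ r in Ioi a, (r:ℂ) * Complex.exp (-((r^2 : ℝ) : ℂ))) =
      ((Real.exp (-a^2) / 2 : ℝ) : ℂ) := by
  have h1 : (∫ r in Ioi a, (r:ℂ) * Complex.exp (-((r^2 : ℝ) : ℂ))) =
      ∫ r in Ioi a, ((r * Real.exp (-r^2) : ℝ) : ℂ) := by
    congr 1
    funext r
    rw [Complex.ofReal_mul, Complex.ofReal_exp, Complex.ofReal_neg]
  rw [h1, ← radial_real a]
  norm_cast



/-- The weighted Cauchy transform of `f(ξ) = ξ` is `-e^{-|z|²}`. -/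
theorem stmt16 (z : ℂ) : cauchyT (fun ξ => ξ) z = -gauss z := by
  have hπ : (Real.pi : ℂ) ≠ 0 := Complex.ofReal_ne_zero.mpr Real.pi_ne_zero
  set a := ‖z‖ with ha
  have ha0 : 0 ≤ a := norm_nonneg z
  set F : ℂ → ℂ := fun ξ => ξ / (z - ξ) * gauss ξ with hF
  have hsymmCM : ∀ p : ℝ × ℝ, Complex.polarCoord.symm p = circleMap 0 p.1 p.2 := by
    intro p
    simp [Complex.polarCoord_symm_apply, circleMap, Complex.exp_mul_I, Complex.ofReal_cos,
      Complex.ofReal_sin]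
  have hrep : IntegrableOn (fun p : ℝ × ℝ => p.1 • F (Complex.polarCoord.symm p))
      polarCoord.target := (integrableOn_polarC_iff F).mpr (integrable_F z)
  have key : (∫ ξ : ℂ, F ξ) = -(Real.pi : ℂ) * gauss z := by
    rw [← Complex.integral_comp_polarCoord_symm F]
    rw [polarCoord_target] at hrep ⊢
    rw [Measure.volume_eq_prod ℝ ℝ] at hrep ⊢
    rw [setIntegral_prod _ hrep]
    have inner_eq : ∀ r ∈ Ioi (0:ℝ), r ≠ a →
        (∫ θ in Ioo (-Real.pi) Real.pi, (r, θ).1 • F (Complex.polarCoord.symm (r, θ))) =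
          indicator (Ioi a) (fun r : ℝ =>
            (-(2 * Real.pi) : ℂ) * ((r:ℂ) * Complex.exp (-((r^2 : ℝ) : ℂ)))) r := by
      intro r hr hne
      have hr0 : 0 < r := hr
      have hgauss : ∀ θ : ℝ, gauss (circleMap 0 r θ) = Complex.exp (-((r^2 : ℝ) : ℂ)) := by
        intro θ
        have habs : ‖circleMap 0 r θ‖ = r := by
          rw [norm_circleMap_zero, abs_of_pos hr0]
        unfold gauss
        rw [← Complex.sq_norm, habs]
      have step1 : ∀ θ : ℝ, (r, θ).1 • F (Complex.polarCoord.symm (r, θ)) =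
          ((r:ℂ) * Complex.exp (-((r^2 : ℝ) : ℂ))) *
            (circleMap 0 r θ / (z - circleMap 0 r θ)) := by
        intro θ
        rw [hsymmCM (r, θ)]
        simp only [hF]
        rw [Complex.real_smul, hgauss θ]
        ring
      simp_rw [step1]
      rw [MeasureTheory.integral_const_mul]
      rcases lt_or_gt_of_ne hne with hlt | hgt
      · rw [angular_value_lt z hr0 hlt, mul_zero,
          indicator_of_notMem (by exact notMem_Ioi.mpr hlt.le)]
      · rw [angular_value_gt z hr0 hgt, indicator_of_mem (by exact hgt)]
        ring
    have hae : ∀ᵐ r : ℝ, r ∈ Ioi (0:ℝ) →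
        (∫ θ in Ioo (-Real.pi) Real.pi, (r, θ).1 • F (Complex.polarCoord.symm (r, θ))) =
          indicator (Ioi a) (fun r : ℝ =>
            (-(2 * Real.pi) : ℂ) * ((r:ℂ) * Complex.exp (-((r^2 : ℝ) : ℂ)))) r := by
      have hne : ∀ᵐ r : ℝ, r ≠ a := by
        rw [ae_iff]
        have : {r : ℝ | ¬ r ≠ a} = {a} := by ext r; simp
        rw [this]
        exact measure_singleton a
      filter_upwards [hne] with r hne hr
      exact inner_eq r hr hne
    rw [setIntegral_congr_ae measurableSet_Ioi hae]
    rw [setIntegral_indicator measurableSet_Ioi]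
    rw [show Ioi (0:ℝ) ∩ Ioi a = Ioi a by
      rw [Set.inter_eq_right]
      exact fun x hx => lt_of_le_of_lt ha0 hx]
    rw [MeasureTheory.integral_const_mul, radial_complex a]
    have hnsq : (Complex.normSq z : ℝ) = a^2 := by rw [ha, ← Complex.sq_norm]
    unfold gauss
    rw [show (-(Complex.normSq z : ℝ) : ℂ) = ((-a^2 : ℝ) : ℂ) by rw [← hnsq]; push_cast; ring]
    rw [← Complex.ofReal_exp]
    push_cast
    ring
  unfold cauchyT
  rw [show (fun ξ : ℂ => (fun ξ : ℂ => ξ) ξ / (z - ξ) * gauss ξ) = F from rfl, key]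
  field_simp

end AuxStmt16
end
end
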